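/- arXiv:1511.05893 — 3 statements merged into one kernel-verified Lean document; each statement's English description precedes it below -/
import Mathlib

section
/- Let T be a generalized Collatz mapping of relatively prime type on Λ. If U ⊆ Λ is T-invariant (T(U) ⊆ U) and every point of U is directed (lies on a semipermeable hyperplane, i.e. the kernel of a strictly positive form for S_r), then every T-trajectory starting in U is divergent (not eventually periodic). -/
/-!
Let `y` be a point of a cycle of `T` inside `U` and let `Φ` be a strictly positive form with
`Φ y = 0`. Applying `Φ` to `d • T z = m • z + r` gives `d Φ(T z) = m Φ(z) + Φ(r)` with `m > 0`
and `Φ(r) ≥ 0`, so `Φ` is nonnegative along the cycle; as it returns to `0`, every term vanishes,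
hence all shift vectors met on the cycle are `0`. Then `d^p • y = M • y` with `M` a product of
multipliers, so `d^p = M` since `y ≠ 0`, contradicting `IsCoprime M d` and `d > 1`.
-/

def toE {e : ℕ} (x : Fin e → ℤ) : Fin e → ℝ := fun i => (x i : ℝ)

def res {e : ℕ} (d : ℕ) (x : Fin e → ℤ) : Fin e → ZMod d := fun i => (x i : ZMod d)

@[simp]
lemma toE_zero {e : ℕ} : toE (0 : Fin e → ℤ) = 0 := by
  funext i; simp [toE]

@[simp]
lemma toE_add {e : ℕ} (x y : Fin e → ℤ) : toE (x + y) = toE x + toE y := by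
  funext i; simp [toE]

@[simp]
lemma toE_zsmul {e : ℕ} (a : ℤ) (x : Fin e → ℤ) : toE (a • x) = (a : ℝ) • toE x := by
  funext i; simp [toE]

-- Nonnegativity of `a` propagates forwards, then vanishing propagates backwards from `a p = 0`.
lemma forcing_eq_zero_of_recurrence {K : Type*} [CommRing K] [LinearOrder K]
    [IsStrictOrderedRing K] {a m s : ℕ → K} {d : K} {p : ℕ} (hd : 0 < d)
    (hm : ∀ k, 0 < m k) (hs : ∀ k, 0 ≤ s k) (ha : ∀ k, d * a (k + 1) = m k * a k + s k)
    (ha₀ : 0 ≤ a 0) (hap : a p = 0) : ∀ k < p, s k = 0 := by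
  have hnonneg : ∀ k, 0 ≤ a k := by
    intro k
    induction k with
    | zero => exact ha₀
    | succ k ih => exact nonneg_of_mul_nonneg_right (ha k ▸ by nlinarith [hm k, hs k]) hd
  have hstep : ∀ k, a (k + 1) = 0 → m k * a k = 0 ∧ s k = 0 := fun k hk =>
    (add_eq_zero_iff_of_nonneg (mul_nonneg (hm k).le (hnonneg k)) (hs k)).1
      (by rw [← ha k, hk, mul_zero])
  have hzero : ∀ k ≤ p, a k = 0 := fun k hk =>
    Nat.decreasingInduction (motive := fun k _ => a k = 0)
      (fun k _ hk => (mul_eq_zero.1 (hstep k hk).1).resolve_left (hm k).ne') hap hk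
  exact fun k hk => (hstep k (hzero (k + 1) hk)).2

lemma iterate_smul_eq_prod_smul {R M : Type*} [CommRing R] [AddCommGroup M] [Module R M]
    {T : M → M} {d : R} {c : ℕ → R} {y : M} {p : ℕ}
    (hT : ∀ k < p, d • T (T^[k] y) = c k • T^[k] y) :
    d ^ p • T^[p] y = (∏ k ∈ Finset.range p, c k) • y := by
  induction p with
  | zero => simp
  | succ p ih =>
    rw [Function.iterate_succ_apply', pow_succ, mul_smul, hT p p.lt_succ_self, smul_comm,
      ih fun k hk => hT k (hk.trans p.lt_succ_self), smul_smul, Finset.prod_range_succ,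
      mul_comm]

section Collatz

variable {e : ℕ} {d : ℕ} {m : (Fin e → ZMod d) → ℤ} {r : (Fin e → ZMod d) → (Fin e → ℤ)}
  {T : (Fin e → ℤ) → (Fin e → ℤ)}

lemma form_apply_collatz (hT : ∀ x : Fin e → ℤ, (d : ℤ) • T x = m (res d x) • x + r (res d x))
    (Φ : (Fin e → ℝ) →ₗ[ℝ] ℝ) (x : Fin e → ℤ) :
    (d : ℝ) * Φ (toE (T x)) = m (res d x) * Φ (toE x) + Φ (toE (r (res d x))) := by
  have h := congrArg (fun z => Φ (toE z)) (hT x)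
  simpa only [toE_zsmul, toE_add, map_add, map_smul, smul_eq_mul, Int.cast_natCast] using h

lemma shift_eq_zero_on_cycle (hd : 0 < d) (hm : ∀ ω, 0 < m ω)
    (hT : ∀ x : Fin e → ℤ, (d : ℤ) • T x = m (res d x) • x + r (res d x))
    {y : Fin e → ℤ} {p : ℕ} (hy : Function.IsPeriodicPt T p y) (Φ : (Fin e → ℝ) →ₗ[ℝ] ℝ)
    (hΦ : ∀ ω, r ω ≠ 0 → 0 < Φ (toE (r ω))) (hΦy : Φ (toE y) = 0) :
    ∀ k < p, r (res d (T^[k] y)) = 0 := by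
  have hΦr : ∀ ω, 0 ≤ Φ (toE (r ω)) := fun ω => by
    by_cases h : r ω = 0
    · simp [h]
    · exact (hΦ ω h).le
  have hrec : ∀ k, (d : ℝ) * Φ (toE (T^[k + 1] y)) =
      m (res d (T^[k] y)) * Φ (toE (T^[k] y)) + Φ (toE (r (res d (T^[k] y)))) := fun k => by
    rw [Function.iterate_succ_apply']
    exact form_apply_collatz hT Φ (T^[k] y)
  have hforcing := forcing_eq_zero_of_recurrence (a := fun k => Φ (toE (T^[k] y)))
    (p := p) (Nat.cast_pos.2 hd) (fun k => Int.cast_pos.2 (hm (res d (T^[k] y)))) (fun k => hΦr _) hrec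
    hΦy.ge (by simpa only [hy.eq] using hΦy)
  exact fun k hk => by_contra fun h => (hΦ _ h).ne' (hforcing k hk)

lemma not_isPeriodicPt_of_shift_eq_zero (hd : 1 < d) (hcop : ∀ ω, IsCoprime (m ω) (d : ℤ))
    (hT : ∀ x : Fin e → ℤ, (d : ℤ) • T x = m (res d x) • x + r (res d x))
    {y : Fin e → ℤ} (hy : y ≠ 0) {p : ℕ} (hp : 0 < p) (hr : ∀ k < p, r (res d (T^[k] y)) = 0) :
    ¬ Function.IsPeriodicPt T p y := by
  intro hper
  have hlin : ∀ k < p, (d : ℤ) • T (T^[k] y) = m (res d (T^[k] y)) • T^[k] y := fun k hk => by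
    rw [hT, hr k hk, add_zero]
  have hprod := iterate_smul_eq_prod_smul hlin
  rw [hper.eq] at hprod
  have hpow : (d : ℤ) ^ p = ∏ k ∈ Finset.range p, m (res d (T^[k] y)) :=
    smul_left_injective ℤ hy hprod
  have hunit : IsUnit (d : ℤ) := by
    rw [← isCoprime_self, ← IsCoprime.pow_left_iff hp, hpow]
    exact IsCoprime.prod_left fun k _ => hcop _
  have : (d : ℤ) = 1 := by simpa using Int.isUnit_iff.1 hunit
  omega

end Collatz

/-- if `T` is a generalized Collatz mapping of relatively prime type
and `U ⊆ Λ` is a `T`-invariant set of directed points (nonzero points lying on a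
semipermeable hyperplane, i.e. the kernel of a strictly positive form for the
shift vectors), then every `T`-trajectory starting in `U` is divergent: it is not
eventually periodic. -/
theorem invariant_directed_divergent
    {e : ℕ} (d : ℕ) (hd : 1 < d)
    (m : (Fin e → ZMod d) → ℤ) (r : (Fin e → ZMod d) → (Fin e → ℤ))
    (hm : ∀ ω, 0 < m ω)
    (hcop : ∀ ω, IsCoprime (m ω) (d : ℤ))
    (T : (Fin e → ℤ) → (Fin e → ℤ))
    (hT : ∀ x : Fin e → ℤ, (d : ℤ) • T x = m (res d x) • x + r (res d x))
    (U : Set (Fin e → ℤ))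
    (hUinv : ∀ x ∈ U, T x ∈ U)
    (hUdir : ∀ x ∈ U, x ≠ 0 ∧
      ∃ Φ : (Fin e → ℝ) →ₗ[ℝ] ℝ,
        (∀ ω, r ω ≠ 0 → 0 < Φ (toE (r ω))) ∧ Φ (toE x) = 0) :
    ∀ x ∈ U, ¬ ∃ N p : ℕ, 0 < p ∧ T^[N + p] x = T^[N] x := by
  rintro x hx ⟨N, p, hp, hper⟩
  have hyU : T^[N] x ∈ U := Set.MapsTo.iterate hUinv N hx
  have hcycle : Function.IsPeriodicPt T p (T^[N] x) := by
    rwa [Function.IsPeriodicPt, Function.IsFixedPt, ← Function.iterate_add_apply, add_comm]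
  obtain ⟨hy0, Φ, hΦ, hΦy⟩ := hUdir _ hyU
  exact not_isPeriodicPt_of_shift_eq_zero hd hcop hT hy0 hp
    (shift_eq_zero_on_cycle (by omega) hm hT hcycle Φ hΦ hΦy) hcycle
end

section
/- Let T be a generalized Collatz mapping on a lattice Λ ⊆ E whose shift vectors span E over ℝ. Then there are only finitely many separating hyperplanes for T. -/
/-!
Let `Φ` be separating. Its values on the lattice form a subgroup `S` of `ℝ`. If `S` were dense,
translating a point of a class `ω` with `Φ(r_ω) ≠ 0` by `d`-multiples of lattice vectors (which stays in
`ω`) would make `0 < m_ω Φ(x) < |Φ(r_ω)|`; so `S = ℤc` with `c ≠ 0`, and `Ψ = c⁻¹Φ` is a separating form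
with the same kernel taking exactly the integer values on the lattice. In every class `ω` some `x` then has
`Ψ(x) ∈ [1, d]`, whence `Ψ(r_ω)` is an integer with `|Ψ(r_ω)| < d m_ω`. As the `r_ω` span, `Ψ` is
determined by these finitely many integers.
-/

open Set

def IsSeparating {e : ℕ} (d : ℕ) (m : (Fin e → ZMod d) → ℤ) (r : (Fin e → ZMod d) → (Fin e → ℤ))
    (Φ : (Fin e → ℝ) →ₗ[ℝ] ℝ) : Prop :=
  ∀ x : Fin e → ℤ, Φ (toE x) ≠ 0 → |Φ (toE (r (res d x)))| < |(m (res d x) : ℝ) * Φ (toE x)|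

def latticeForm {e : ℕ} (Φ : (Fin e → ℝ) →ₗ[ℝ] ℝ) : (Fin e → ℤ) →+ ℝ :=
  Φ.toAddMonoidHom.comp (AddMonoidHom.compLeft (Int.castAddHom ℝ) (Fin e))

@[simp]
lemma latticeForm_apply {e : ℕ} (Φ : (Fin e → ℝ) →ₗ[ℝ] ℝ) (x : Fin e → ℤ) :
    latticeForm Φ x = Φ (toE x) :=
  rfl

lemma latticeForm_smul {e : ℕ} (c : ℝ) (Φ : (Fin e → ℝ) →ₗ[ℝ] ℝ) :
    latticeForm (c • Φ) = (AddMonoidHom.mulLeft c).comp (latticeForm Φ) := by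
  ext x
  simp

lemma apply_toE_add_smul {e : ℕ} (Φ : (Fin e → ℝ) →ₗ[ℝ] ℝ) (x y : Fin e → ℤ) (n : ℤ) :
    Φ (toE (x + n • y)) = Φ (toE x) + n * Φ (toE y) := by
  change latticeForm Φ (x + n • y) = _
  rw [map_add, map_zsmul, zsmul_eq_mul]
  rfl

lemma res_surjective {e d : ℕ} : Function.Surjective (res (e := e) d) :=
  fun ω => ⟨fun i => (ω i).cast, funext fun i => ZMod.intCast_zmod_cast (ω i)⟩

lemma res_add_smul {e : ℕ} (d : ℕ) (x y : Fin e → ℤ) : res d (x + (d : ℤ) • y) = res d x := by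
  funext i
  simp [res]

lemma Dense.exists_add_mul_mem_Ioo {s : Set ℝ} (hs : Dense s) (a : ℝ) {δ ε : ℝ} (hδ : 0 < δ)
    (hε : 0 < ε) : ∃ t ∈ s, a + δ * t ∈ Ioo 0 ε := by
  obtain ⟨t, hts, hlo, hhi⟩ := hs.exists_between (div_lt_div_of_pos_right (by linarith) hδ :
    -a / δ < (ε - a) / δ)
  refine ⟨t, hts, ?_, ?_⟩
  · rw [div_lt_iff₀' hδ] at hlo
    linarith
  · rw [lt_div_iff₀' hδ] at hhi
    linarith

lemma Int.exists_add_mul_mem_Icc (k : ℤ) {d : ℤ} (hd : 0 < d) : ∃ q : ℤ, k + d * q ∈ Icc 1 d := by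
  refine ⟨-((k - 1) / d), ?_⟩
  have hdiv := Int.emod_add_mul_ediv (k - 1) d
  have hlo := Int.emod_nonneg (k - 1) hd.ne'
  have hhi := Int.emod_lt_of_pos (k - 1) hd
  constructor <;> linarith

namespace IsSeparating

variable {e d : ℕ} {m : (Fin e → ZMod d) → ℤ} {r : (Fin e → ZMod d) → (Fin e → ℤ)}
  {Φ : (Fin e → ℝ) →ₗ[ℝ] ℝ}

lemma smul (hΦ : IsSeparating d m r Φ) {c : ℝ} (hc : c ≠ 0) : IsSeparating d m r (c • Φ) := by
  intro x hx
  simp only [LinearMap.smul_apply, smul_eq_mul, mul_left_comm _ c, abs_mul c] at hx ⊢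
  exact mul_lt_mul_of_pos_left (hΦ x (right_ne_zero_of_mul hx)) (abs_pos.2 hc)

lemma not_dense_range [NeZero d] (hΦ : IsSeparating d m r Φ) {ω : Fin e → ZMod d}
    (hm : 0 < m ω) (hω : Φ (toE (r ω)) ≠ 0) : ¬Dense ((latticeForm Φ).range : Set ℝ) := by
  intro hdense
  obtain ⟨x₀, rfl⟩ := res_surjective ω
  have hm' : (0 : ℝ) < m (res d x₀) := by exact_mod_cast hm
  obtain ⟨_, ⟨y, rfl⟩, hpos, hsmall⟩ := hdense.exists_add_mul_mem_Ioo (Φ (toE x₀))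
    (Nat.cast_pos.2 (Nat.pos_of_neZero d)) (div_pos (abs_pos.2 hω) hm')
  rw [latticeForm_apply] at hpos hsmall
  have hx := apply_toE_add_smul Φ x₀ y d
  rw [Int.cast_natCast] at hx
  have hsep := hΦ (x₀ + (d : ℤ) • y) (by rw [hx]; exact hpos.ne')
  rw [res_add_smul, hx, abs_of_pos (mul_pos hm' hpos)] at hsep
  rw [lt_div_iff₀' hm'] at hsmall
  exact hsep.not_gt hsmall

lemma exists_range_eq_int [NeZero d] (hΦ : IsSeparating d m r Φ) {ω : Fin e → ZMod d}
    (hm : 0 < m ω) (hω : Φ (toE (r ω)) ≠ 0) :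
    ∃ Ψ : (Fin e → ℝ) →ₗ[ℝ] ℝ, LinearMap.ker Ψ = LinearMap.ker Φ ∧ IsSeparating d m r Ψ ∧
      (latticeForm Ψ).range = AddSubgroup.zmultiples 1 := by
  obtain ⟨c, hc⟩ := ((latticeForm Φ).range.dense_or_cyclic).resolve_left
    (hΦ.not_dense_range hm hω)
  rw [← AddSubgroup.zmultiples_eq_closure] at hc
  have hc0 : c ≠ 0 := by
    rintro rfl
    have hrω : Φ (toE (r ω)) ∈ (latticeForm Φ).range := ⟨r ω, rfl⟩
    simp [hc, hω] at hrω
  refine ⟨c⁻¹ • Φ, LinearMap.ker_smul Φ _ (inv_ne_zero hc0), hΦ.smul (inv_ne_zero hc0), ?_⟩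
  rw [latticeForm_smul, AddMonoidHom.range_comp, hc, AddMonoidHom.map_zmultiples]
  simp [hc0]

lemma apply_mem_Ioo [NeZero d] (hΦ : IsSeparating d m r Φ)
    (hΦℤ : (latticeForm Φ).range = AddSubgroup.zmultiples 1) (ω : Fin e → ZMod d)
    (hm : 0 ≤ m ω) :
    Φ (toE (r ω)) ∈ ((↑) : ℤ → ℝ) '' Ioo (-(d * m ω)) (d * m ω) := by
  have hvalue : ∀ x, ∃ k : ℤ, Φ (toE x) = k := fun x => by
    obtain ⟨k, hk⟩ := AddSubgroup.mem_zmultiples_iff.1 (hΦℤ ▸ AddMonoidHom.mem_range.2 ⟨x, rfl⟩)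
    exact ⟨k, by simpa using hk.symm⟩
  have hpreimage : ∀ k : ℤ, ∃ x, Φ (toE x) = k := fun k => by
    obtain ⟨x, hx⟩ := hΦℤ ▸ AddSubgroup.mem_zmultiples_iff.2 ⟨k, rfl⟩
    exact ⟨x, by simpa using hx⟩
  obtain ⟨x₀, rfl⟩ := res_surjective ω
  obtain ⟨k₀, hk₀⟩ := hvalue x₀
  obtain ⟨q, hq₁, hqd⟩ := Int.exists_add_mul_mem_Icc k₀ (Int.natCast_pos.2 (Nat.pos_of_neZero d))
  obtain ⟨y, hy⟩ := hpreimage q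
  have hx : Φ (toE (x₀ + (d : ℤ) • y)) = ((k₀ + d * q : ℤ) : ℝ) := by
    rw [apply_toE_add_smul, hk₀, hy]
    push_cast
    rfl
  obtain ⟨k, hk⟩ := hvalue (r (res d x₀))
  have hsep := hΦ _ (by rw [hx]; exact_mod_cast (by omega : k₀ + d * q ≠ 0))
  rw [res_add_smul, hx, hk] at hsep
  have hsep' : |k| < |m (res d x₀) * (k₀ + d * q)| := by exact_mod_cast hsep
  rw [abs_mul, abs_of_nonneg hm, abs_of_pos (show 0 < k₀ + d * q by omega)] at hsep'
  have hbound : |k| < d * m (res d x₀) := by nlinarith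
  exact ⟨k, abs_lt.1 hbound, hk.symm⟩

end IsSeparating

lemma LinearMap.finite_setOf_forall_apply_mem {K V ι : Type*} [Field K] [AddCommGroup V]
    [Module K V] [Finite ι] {v : ι → V} (hv : Submodule.span K (Set.range v) = ⊤) {A : ι → Set K}
    (hA : ∀ i, (A i).Finite) : {f : V →ₗ[K] K | ∀ i, f (v i) ∈ A i}.Finite := by
  have hinj : Function.Injective fun (f : V →ₗ[K] K) i => f (v i) :=
    fun _ _ h => LinearMap.ext_on_range hv (congrFun h)
  exact (Finite.pi hA).preimage hinj.injOn |>.subset fun f hf i _ => hf i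

theorem separating_hyperplanes_finite_general
    {e : ℕ} (d : ℕ) (hd : 1 < d)
    (m : (Fin e → ZMod d) → ℤ) (r : (Fin e → ZMod d) → (Fin e → ℤ))
    (hm : ∀ ω, 0 < m ω)
    (hspan : Submodule.span ℝ (Set.range fun ω => toE (r ω)) = ⊤) :
    {H : Submodule ℝ (Fin e → ℝ) |
      ∃ Φ : (Fin e → ℝ) →ₗ[ℝ] ℝ, Φ ≠ 0 ∧ H = LinearMap.ker Φ ∧
        ∀ x : Fin e → ℤ, Φ (toE x) ≠ 0 →
          |Φ (toE (r (res d x)))| < |(m (res d x) : ℝ) * Φ (toE x)|}.Finite := by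
  have : NeZero d := ⟨by omega⟩
  refine ((LinearMap.finite_setOf_forall_apply_mem hspan fun ω =>
    (finite_Ioo (-(d * m ω) : ℤ) (d * m ω)).image ((↑) : ℤ → ℝ)).image LinearMap.ker).subset ?_
  rintro H ⟨Φ, hΦ0, rfl, hΦ⟩
  obtain ⟨ω, hω⟩ : ∃ ω, Φ (toE (r ω)) ≠ 0 := by
    by_contra! h
    exact hΦ0 (LinearMap.ext_on_range hspan (by simpa using h))
  obtain ⟨Ψ, hker, hΨ, hΨℤ⟩ := IsSeparating.exists_range_eq_int hΦ (hm ω) hω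
  exact ⟨Ψ, fun ω' => hΨ.apply_mem_Ioo hΨℤ ω' (hm ω').le, hker⟩

/-- if the shift vectors of a generalized Collatz mapping span
`E = ℝ^e`, then there are only finitely many separating hyperplanes, i.e.
kernels of nonzero linear forms `Φ` with `|m_ω Φ(x)| > |Φ(r_ω)|` for all `ω` and
all `x ∈ ω` with `Φ(x) ≠ 0`. -/
theorem separating_hyperplanes_finite
    {e : ℕ} (d : ℕ) (hd : 1 < d)
    (m : (Fin e → ZMod d) → ℤ) (r : (Fin e → ZMod d) → (Fin e → ℤ))
    (hm : ∀ ω, 0 < m ω)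
    (T : (Fin e → ℤ) → (Fin e → ℤ))
    (hT : ∀ x : Fin e → ℤ, (d : ℤ) • T x = m (res d x) • x + r (res d x))
    (hspan : Submodule.span ℝ (Set.range fun ω => toE (r ω)) = ⊤) :
    {H : Submodule ℝ (Fin e → ℝ) |
      ∃ Φ : (Fin e → ℝ) →ₗ[ℝ] ℝ, Φ ≠ 0 ∧ H = LinearMap.ker Φ ∧
        ∀ x : Fin e → ℤ, Φ (toE x) ≠ 0 →
          |Φ (toE (r (res d x)))| < |(m (res d x) : ℝ) * Φ (toE x)|}.Finite :=
  separating_hyperplanes_finite_general d hd m r hm hspan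
end

section
/- Let T be a generalized Collatz mapping of relatively prime type on Λ. For each k ≥ 1 the map Ω_k : Λ/d^kΛ → (Λ/dΛ)^k sending x + d^kΛ to the sequence (T^0(x) mod dΛ, …, T^{k-1}(x) mod dΛ) is a well-defined bijection. -/
lemma res_eq_res_iff {e : ℕ} (n : ℕ) (x y : Fin e → ℤ) :
    res n x = res n y ↔ ∀ i, (n : ℤ) ∣ x i - y i := by
  simp only [res, funext_iff, ZMod.intCast_eq_intCast_iff, Int.modEq_iff_dvd]
  exact forall_congr' fun i => dvd_sub_comm

lemma res_eq_res_of_dvd {e n N : ℕ} (h : n ∣ N) {x y : Fin e → ℤ}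
    (hxy : res N x = res N y) : res n x = res n y := by
  rw [res_eq_res_iff] at hxy ⊢
  exact fun i => (Int.natCast_dvd_natCast.2 h).trans (hxy i)

lemma res_intCast_cast {e n : ℕ} [NeZero n] (z : Fin e → ZMod n) :
    res n (fun i => ((z i).cast : ℤ)) = z :=
  funext fun i => ZMod.intCast_zmod_cast (z i)

section CollatzMap

variable {e d : ℕ} {m : (Fin e → ZMod d) → ℤ} {r : (Fin e → ZMod d) → (Fin e → ℤ)}
  {T : (Fin e → ℤ) → (Fin e → ℤ)}

lemma natCast_smul_sub_eq_of_res_eq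
    (hT : ∀ x : Fin e → ℤ, (d : ℤ) • T x = m (res d x) • x + r (res d x))
    {x y : Fin e → ℤ} (hxy : res d x = res d y) :
    (d : ℤ) • (T x - T y) = m (res d x) • (x - y) := by
  rw [smul_sub, smul_sub, hT, hT, hxy]
  abel

lemma res_pow_succ_eq_iff (hd : d ≠ 0) (hcop : ∀ ω, IsCoprime (m ω) (d : ℤ))
    (hT : ∀ x : Fin e → ℤ, (d : ℤ) • T x = m (res d x) • x + r (res d x))
    (n : ℕ) {x y : Fin e → ℤ} (hxy : res d x = res d y) :
    res (d ^ (n + 1)) x = res (d ^ (n + 1)) y ↔ res (d ^ n) (T x) = res (d ^ n) (T y) := by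
  simp only [res_eq_res_iff, Nat.cast_pow]
  refine forall_congr' fun i => ?_
  have key := congrFun (natCast_smul_sub_eq_of_res_eq hT hxy) i
  simp only [Pi.smul_apply, Pi.sub_apply, smul_eq_mul] at key
  rw [← mul_dvd_mul_iff_left (Int.natCast_ne_zero.2 hd) (b := (d : ℤ) ^ n), ← pow_succ', key]
  exact ⟨fun h => dvd_mul_of_dvd_right h _, (hcop _).symm.pow_left.dvd_of_dvd_mul_left⟩

lemma res_pow_eq_iff_forall_iterate (hd : d ≠ 0) (hcop : ∀ ω, IsCoprime (m ω) (d : ℤ))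
    (hT : ∀ x : Fin e → ℤ, (d : ℤ) • T x = m (res d x) • x + r (res d x))
    (k : ℕ) (x y : Fin e → ℤ) :
    res (d ^ k) x = res (d ^ k) y ↔ ∀ j < k, res d (T^[j] x) = res d (T^[j] y) := by
  induction k generalizing x y with
  | zero => simpa using Subsingleton.elim _ _
  | succ k ih =>
    rw [Nat.forall_lt_succ_left]
    simp only [Function.iterate_zero_apply, Function.iterate_succ_apply, ← ih]
    constructor
    · intro h
      have hxy := res_eq_res_of_dvd (dvd_pow_self d k.succ_ne_zero) h
      exact ⟨hxy, (res_pow_succ_eq_iff hd hcop hT k hxy).1 h⟩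
    · rintro ⟨hxy, h⟩
      exact (res_pow_succ_eq_iff hd hcop hT k hxy).2 h

end CollatzMap

theorem omega_k_bijective_general
    {e : ℕ} (d : ℕ) (hd : 1 < d)
    (m : (Fin e → ZMod d) → ℤ) (r : (Fin e → ZMod d) → (Fin e → ℤ))
    (hcop : ∀ ω, IsCoprime (m ω) (d : ℤ))
    (T : (Fin e → ℤ) → (Fin e → ℤ))
    (hT : ∀ x : Fin e → ℤ, (d : ℤ) • T x = m (res d x) • x + r (res d x))
    (k : ℕ) :
    ∃ Ω : (Fin e → ZMod (d ^ k)) → (Fin k → Fin e → ZMod d),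
      (∀ x : Fin e → ℤ, Ω (res (d ^ k) x) = fun i : Fin k => res d (T^[i.val] x)) ∧
      Function.Bijective Ω := by
  have hd0 : d ≠ 0 := by omega
  have : NeZero d := ⟨hd0⟩
  have fibers := res_pow_eq_iff_forall_iterate hd0 hcop hT k
  set lift : (Fin e → ZMod (d ^ k)) → (Fin e → ℤ) := fun z i => ((z i).cast : ℤ)
  refine ⟨fun z i => res d (T^[i.val] (lift z)), fun x => ?_, ?_⟩
  · funext i
    exact (fibers _ _).1 (res_intCast_cast _) i i.2
  · refine (Fintype.bijective_iff_injective_and_card _).2 ⟨fun z w hzw => ?_, ?_⟩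
    · rw [← res_intCast_cast z, ← res_intCast_cast w]
      exact (fibers _ _).2 fun j hj => congrFun hzw ⟨j, hj⟩
    · simp only [Fintype.card_fun, ZMod.card, Fintype.card_fin]
      ring

/-- for a generalized Collatz mapping of relatively prime type, the
map `Ω_k : Λ/d^kΛ → (Λ/dΛ)^k`, `x + d^kΛ ↦ (T^0(x) mod dΛ, …, T^{k-1}(x) mod dΛ)`,
is a well-defined bijection. -/
theorem omega_k_bijective
    {e : ℕ} (d : ℕ) (hd : 1 < d)
    (m : (Fin e → ZMod d) → ℤ) (r : (Fin e → ZMod d) → (Fin e → ℤ))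
    (hm : ∀ ω, 0 < m ω)
    (hcop : ∀ ω, IsCoprime (m ω) (d : ℤ))
    (T : (Fin e → ℤ) → (Fin e → ℤ))
    (hT : ∀ x : Fin e → ℤ, (d : ℤ) • T x = m (res d x) • x + r (res d x))
    (k : ℕ) (hk : 1 ≤ k) :
    ∃ Ω : (Fin e → ZMod (d ^ k)) → (Fin k → Fin e → ZMod d),
      (∀ x : Fin e → ℤ, Ω (res (d ^ k) x) = fun i : Fin k => res d (T^[i.val] x)) ∧
      Function.Bijective Ω :=
  omega_k_bijective_general d hd m r hcop T hT k
end
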